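/- For θ ∈ [m, M] with 0 < m ≤ M and |μ| ≤ M, the integral f¹(y, θ, μ) = ∫ exp(−θ(x−μ)²/2 − exp(x) + xy) dx satisfies the lower bound f¹(y, θ, μ) ≥ exp(y·log y − y) · min_{t∈[−1,0]} exp(−θ(log y − t − μ)²/2) · (∫_{−1}^0 exp(−t²/2) dt)/√y for all integers y ≥ 1. -/

import Mathlib

/-!
Substituting `x = log y + u` turns `f1 y θ μ` into `exp (y log y - y)` times the integral of
`plnKernel θ a y u = exp (-θ (u - a)² / 2) · exp (-y (eᵘ - 1 - u))`, where `a = μ - log y`.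
The infimum in the bound runs over `x ∈ [log y, log y + 1]`, i.e. `u ∈ [0, 1]`, so it is at most
`exp (-θ max (a², (1 - a)²) / 2)`.

If `a ≤ 0`, the Gaussian factor is at least this value on `[-1, 0]`, where `eᵘ - 1 - u ≤ u² / 2`;
rescaling `u` by `√y` gives the bound. If `a ≥ 0` one works on `[0, 1]` instead, where only
`eᵘ - 1 - u ≤ 3u² / 4` holds; for `y ≥ 2` the rescaled interval `[0, √y] ⊇ [0, 7/5]` is long
enough to make up for the worse constant. For `y = 1` it is not, and one uses `[-1, 1]`: if
`θ (1 + 2a) ≤ 4` the Gaussian factor loses at most `e⁻²` on `[-1, 0]`, otherwise the concavity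
of `-(u - a)²` gains a factor `exp (u (1 - u))` on `[0, 1]`. The numerical comparisons that remain
are between integrals of polynomials.
-/

open Real MeasureTheory

/-- Unnormalized marginal likelihood of the one-dimensional Poisson log-normal model. -/
noncomputable def f1 (y : ℕ) (θ μ : ℝ) : ℝ :=
  ∫ x : ℝ, Real.exp (-(θ * (x - μ) ^ 2) / 2) * Real.exp (-Real.exp x) * Real.exp (x * y)

open Set

lemma exp_neg_le_one_sub_add_sq_div_two {x : ℝ} (hx : 0 ≤ x) :
    exp (-x) ≤ 1 - x + x ^ 2 / 2 := by
  rw [exp_neg, inv_le_iff_one_le_mul₀' (exp_pos x)]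
  calc (1 : ℝ) ≤ (1 + x + x ^ 2 / 2) * (1 - x + x ^ 2 / 2) := by nlinarith [pow_nonneg hx 4]
    _ ≤ exp x * (1 - x + x ^ 2 / 2) := by
        gcongr
        · nlinarith
        · exact quadratic_le_exp_of_nonneg hx

lemma exp_sub_one_sub_le_sq_div_two {u : ℝ} (hu : u ≤ 0) : exp u - 1 - u ≤ u ^ 2 / 2 := by
  have := exp_neg_le_one_sub_add_sq_div_two (neg_nonneg.mpr hu)
  rw [neg_neg] at this
  linarith [neg_sq u]

lemma exp_sub_one_sub_le_three_quarters_mul_sq {u : ℝ} (hu : |u| ≤ 1) :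
    exp u - 1 - u ≤ 3 / 4 * u ^ 2 := by
  have h := (abs_le.mp (Real.exp_bound hu (n := 2) two_pos)).2
  norm_num [Finset.sum_range_succ, sq_abs] at h
  linarith

lemma one_sub_sq_le_exp_neg {s : ℝ} (hs : s ^ 2 ≤ 8 / 3) :
    (1 - 3 * s ^ 2 / 8) ^ 2 ≤ exp (-(3 / 4 * s ^ 2)) := by
  have := one_sub_div_pow_le_exp_neg (n := 2) (t := 3 / 4 * s ^ 2) (by push_cast; linarith)
  convert this using 2
  push_cast; ring

lemma integral_one_sub_sq (c : ℝ) :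
    ∫ s in (0 : ℝ)..c, (1 - 3 * s ^ 2 / 8) ^ 2 = c - c ^ 3 / 4 + 9 * c ^ 5 / 320 := by
  have hderiv (s : ℝ) : HasDerivAt (fun s => s - s ^ 3 / 4 + 9 * s ^ 5 / 320)
      ((1 - 3 * s ^ 2 / 8) ^ 2) s := by
    refine (((hasDerivAt_id' s).sub ((hasDerivAt_pow 3 s).div_const 4)).add
      (((hasDerivAt_pow 5 s).const_mul 9).div_const 320)).congr_deriv ?_
    norm_num; ring
  rw [intervalIntegral.integral_eq_sub_of_hasDerivAt (fun s _ => hderiv s)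
    (Continuous.intervalIntegrable (by fun_prop) _ _)]
  ring

lemma integral_exp_neg_sq_div_two_le : ∫ t in (-1 : ℝ)..0, exp (-t ^ 2 / 2) ≤ 103 / 120 := by
  have hderiv (t : ℝ) : HasDerivAt (fun t => t - t ^ 3 / 6 + t ^ 5 / 40)
      (1 - t ^ 2 / 2 + (t ^ 2 / 2) ^ 2 / 2) t := by
    refine (((hasDerivAt_id' t).sub ((hasDerivAt_pow 3 t).div_const 6)).add
      ((hasDerivAt_pow 5 t).div_const 40)).congr_deriv ?_
    norm_num; ring
  calc ∫ t in (-1 : ℝ)..0, exp (-t ^ 2 / 2)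
      ≤ ∫ t in (-1 : ℝ)..0, (1 - t ^ 2 / 2 + (t ^ 2 / 2) ^ 2 / 2) := by
        refine intervalIntegral.integral_mono_on (by norm_num)
          (Continuous.intervalIntegrable (by fun_prop) _ _)
          (Continuous.intervalIntegrable (by fun_prop) _ _) fun t _ => ?_
        rw [neg_div]
        exact exp_neg_le_one_sub_add_sq_div_two (by positivity)
    _ = 103 / 120 := by
        rw [intervalIntegral.integral_eq_sub_of_hasDerivAt (fun t _ => hderiv t)
          (Continuous.intervalIntegrable (by fun_prop) _ _)]
        norm_num

lemma sq_sub_add_le_max (a : ℝ) {u : ℝ} (hu : u ∈ Icc (0 : ℝ) 1) :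
    (u - a) ^ 2 + (1 + 2 * a) * (u * (1 - u)) / 2 ≤ max (a ^ 2) ((1 - a) ^ 2) := by
  obtain ⟨hu0, hu1⟩ := hu
  rcases le_total a (1 / 2) with ha | ha
  · refine le_trans ?_ (le_max_right _ _)
    nlinarith [mul_nonneg (mul_nonneg (sub_nonneg.mpr hu1) (by linarith : (0 : ℝ) ≤ 1 - 2 * a))
      (by linarith : (0 : ℝ) ≤ 1 + u / 2)]
  · refine le_trans ?_ (le_max_left _ _)
    nlinarith [mul_nonneg (mul_nonneg hu0 (by linarith : (0 : ℝ) ≤ 2 * a - 1))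
      (by linarith : (0 : ℝ) ≤ 1 + u)]

lemma integral_exp_neg_sq_div_two_div_sqrt_le {y : ℝ} (hy : 1 ≤ y) :
    (∫ t in (-1 : ℝ)..0, exp (-t ^ 2 / 2)) / √y ≤ ∫ t in (-1 : ℝ)..0, exp (-(y * t ^ 2) / 2) := by
  have hy0 : 0 < √y := sqrt_pos.mpr (by linarith)
  have hscale : ∫ t in (-1 : ℝ)..0, exp (-(y * t ^ 2) / 2)
      = (√y)⁻¹ * ∫ s in -√y..0, exp (-s ^ 2 / 2) := by
    have := intervalIntegral.integral_comp_mul_left (fun s => exp (-s ^ 2 / 2)) hy0.ne'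
      (a := -1) (b := 0)
    simp only [mul_pow, sq_sqrt (by linarith : (0 : ℝ) ≤ y), mul_neg, mul_one, mul_zero,
      smul_eq_mul] at this
    exact this
  rw [hscale, div_eq_inv_mul]
  gcongr
  exact intervalIntegral.integral_mono_interval (by simpa using one_le_sqrt.mpr hy) (by norm_num)
    le_rfl (Filter.Eventually.of_forall fun s => (exp_pos _).le)
    (Continuous.intervalIntegrable (by fun_prop) _ _)

lemma integral_exp_neg_sq_div_two_div_sqrt_le_of_two_le {y : ℝ} (hy : 2 ≤ y) :
    (∫ t in (-1 : ℝ)..0, exp (-t ^ 2 / 2)) / √y ≤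
      ∫ u in (0 : ℝ)..1, exp (-(3 / 4 * (y * u ^ 2))) := by
  have hy0 : 0 < √y := sqrt_pos.mpr (by linarith)
  have hscale : ∫ u in (0 : ℝ)..1, exp (-(3 / 4 * (y * u ^ 2)))
      = (√y)⁻¹ * ∫ s in (0 : ℝ)..√y, exp (-(3 / 4 * s ^ 2)) := by
    have := intervalIntegral.integral_comp_mul_left (fun s => exp (-(3 / 4 * s ^ 2))) hy0.ne'
      (a := 0) (b := 1)
    simp only [mul_pow, sq_sqrt (by linarith : (0 : ℝ) ≤ y), mul_one, mul_zero,
      smul_eq_mul] at this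
    exact this
  have h75 : 7 / 5 ≤ √y := le_sqrt_of_sq_le (by linarith)
  rw [hscale, div_eq_inv_mul]
  gcongr
  calc ∫ t in (-1 : ℝ)..0, exp (-t ^ 2 / 2)
      ≤ ∫ s in (0 : ℝ)..7 / 5, (1 - 3 * s ^ 2 / 8) ^ 2 := by
        rw [integral_one_sub_sq]; linarith [integral_exp_neg_sq_div_two_le]
    _ ≤ ∫ s in (0 : ℝ)..7 / 5, exp (-(3 / 4 * s ^ 2)) := by
        refine intervalIntegral.integral_mono_on (by norm_num)
          (Continuous.intervalIntegrable (by fun_prop) _ _)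
          (Continuous.intervalIntegrable (by fun_prop) _ _) fun s hs => ?_
        exact one_sub_sq_le_exp_neg (by nlinarith [hs.1, hs.2])
    _ ≤ ∫ s in (0 : ℝ)..√y, exp (-(3 / 4 * s ^ 2)) :=
        intervalIntegral.integral_mono_interval le_rfl (by norm_num) h75
          (Filter.Eventually.of_forall fun s => (exp_pos _).le)
          (Continuous.intervalIntegrable (by fun_prop) _ _)

noncomputable def plnKernel (θ a y u : ℝ) : ℝ :=
  exp (-(θ * (u - a) ^ 2) / 2) * exp (-(y * (exp u - 1 - u)))

lemma f1_eq_exp_mul_integral_plnKernel {y : ℕ} (hy : 1 ≤ y) (θ μ : ℝ) :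
    f1 y θ μ = exp (y * log y - y) * ∫ u, plnKernel θ (μ - log y) y u := by
  have hy0 : (0 : ℝ) < y := by exact_mod_cast hy
  rw [f1, ← integral_add_right_eq_self _ (log y), ← integral_const_mul]
  congr 1 with u
  have : exp (u + log y) = y * exp u := by rw [exp_add, exp_log hy0, mul_comm]
  simp only [plnKernel, this, ← exp_add]
  ring_nf

section plnKernel

variable {θ a y : ℝ}

lemma plnKernel_nonneg (u : ℝ) : 0 ≤ plnKernel θ a y u := by
  unfold plnKernel; positivity

lemma continuous_plnKernel : Continuous (plnKernel θ a y) := by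
  unfold plnKernel; fun_prop

lemma integrable_plnKernel (hθ : 0 < θ) (hy : 0 ≤ y) : Integrable (plnKernel θ a y) := by
  refine ((integrable_exp_neg_mul_sq (half_pos hθ)).comp_sub_right a).mono'
    continuous_plnKernel.aestronglyMeasurable (Filter.Eventually.of_forall fun u => ?_)
  rw [norm_of_nonneg (plnKernel_nonneg u)]
  calc plnKernel θ a y u ≤ exp (-(θ * (u - a) ^ 2) / 2) * 1 := by
        unfold plnKernel
        gcongr
        exact exp_le_one_iff.mpr (by nlinarith [add_one_le_exp u])
    _ = exp (-(θ / 2) * (u - a) ^ 2) := by ring_nf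

variable {u : ℝ}

lemma exp_mul_exp_le_plnKernel_of_nonpos (hθ : 0 ≤ θ) (ha : a ≤ 0) (hy : 0 ≤ y)
    (hu : u ∈ Icc (-1 : ℝ) 0) :
    exp (-(θ * max (a ^ 2) ((1 - a) ^ 2)) / 2) * exp (-(y * u ^ 2) / 2) ≤ plnKernel θ a y u := by
  have hdist : (u - a) ^ 2 ≤ max (a ^ 2) ((1 - a) ^ 2) :=
    le_max_of_le_right (by nlinarith [hu.1, hu.2])
  have hrem := mul_le_mul_of_nonneg_left (exp_sub_one_sub_le_sq_div_two hu.2) hy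
  exact mul_le_mul (exp_le_exp.mpr (by nlinarith [mul_le_mul_of_nonneg_left hdist hθ]))
    (exp_le_exp.mpr (by linarith)) (exp_pos _).le (exp_pos _).le

lemma exp_mul_exp_le_plnKernel_of_nonneg (hθ : 0 ≤ θ) (ha : 0 ≤ a) (hy : 0 ≤ y)
    (hu : u ∈ Icc (0 : ℝ) 1) :
    exp (-(θ * max (a ^ 2) ((1 - a) ^ 2)) / 2) * exp (-(3 / 4 * (y * u ^ 2))) ≤
      plnKernel θ a y u := by
  have hdist : (u - a) ^ 2 ≤ max (a ^ 2) ((1 - a) ^ 2) := by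
    nlinarith [sq_sub_add_le_max a hu, mul_nonneg hu.1 (sub_nonneg.mpr hu.2)]
  have hrem := mul_le_mul_of_nonneg_left (exp_sub_one_sub_le_three_quarters_mul_sq
    (abs_le.mpr ⟨by linarith [hu.1], hu.2⟩)) hy
  exact mul_le_mul (exp_le_exp.mpr (by nlinarith [mul_le_mul_of_nonneg_left hdist hθ]))
    (exp_le_exp.mpr (by linarith)) (exp_pos _).le (exp_pos _).le

lemma le_intervalIntegral_plnKernel_of_nonpos (hθ : 0 ≤ θ) (ha : a ≤ 0) (hy : 1 ≤ y) :
    exp (-(θ * max (a ^ 2) ((1 - a) ^ 2)) / 2) * (∫ t in (-1 : ℝ)..0, exp (-t ^ 2 / 2)) / √y ≤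
      ∫ u in (-1 : ℝ)..0, plnKernel θ a y u := by
  calc _ ≤ exp (-(θ * max (a ^ 2) ((1 - a) ^ 2)) / 2) *
        ∫ u in (-1 : ℝ)..0, exp (-(y * u ^ 2) / 2) := by
        rw [mul_div_assoc]; gcongr; exact integral_exp_neg_sq_div_two_div_sqrt_le hy
    _ = ∫ u in (-1 : ℝ)..0, exp (-(θ * max (a ^ 2) ((1 - a) ^ 2)) / 2) *
        exp (-(y * u ^ 2) / 2) := (intervalIntegral.integral_const_mul _ _).symm
    _ ≤ _ := intervalIntegral.integral_mono_on (by norm_num)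
        (Continuous.intervalIntegrable (by fun_prop) _ _)
        (continuous_plnKernel.intervalIntegrable _ _)
        fun u hu => exp_mul_exp_le_plnKernel_of_nonpos hθ ha (by linarith) hu

lemma le_intervalIntegral_plnKernel_of_nonneg_of_two_le (hθ : 0 ≤ θ) (ha : 0 ≤ a)
    (hy : 2 ≤ y) :
    exp (-(θ * max (a ^ 2) ((1 - a) ^ 2)) / 2) * (∫ t in (-1 : ℝ)..0, exp (-t ^ 2 / 2)) / √y ≤
      ∫ u in (0 : ℝ)..1, plnKernel θ a y u := by
  calc _ ≤ exp (-(θ * max (a ^ 2) ((1 - a) ^ 2)) / 2) *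
        ∫ u in (0 : ℝ)..1, exp (-(3 / 4 * (y * u ^ 2))) := by
        rw [mul_div_assoc]; gcongr; exact integral_exp_neg_sq_div_two_div_sqrt_le_of_two_le hy
    _ = ∫ u in (0 : ℝ)..1, exp (-(θ * max (a ^ 2) ((1 - a) ^ 2)) / 2) *
        exp (-(3 / 4 * (y * u ^ 2))) := (intervalIntegral.integral_const_mul _ _).symm
    _ ≤ _ := intervalIntegral.integral_mono_on (by norm_num)
        (Continuous.intervalIntegrable (by fun_prop) _ _)
        (continuous_plnKernel.intervalIntegrable _ _)
        fun u hu => exp_mul_exp_le_plnKernel_of_nonneg hθ ha (by linarith) hu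

lemma exp_mul_le_intervalIntegral_plnKernel_one_left (hθ : 0 ≤ θ) (ha : 0 ≤ a)
    (hsmall : θ * (1 + 2 * a) ≤ 4) :
    exp (-(θ * max (a ^ 2) ((1 - a) ^ 2)) / 2) * exp (-2) * (∫ t in (-1 : ℝ)..0, exp (-t ^ 2 / 2))
      ≤ ∫ u in (-1 : ℝ)..0, plnKernel θ a 1 u := by
  rw [← intervalIntegral.integral_const_mul]
  refine intervalIntegral.integral_mono_on (by norm_num)
    (Continuous.intervalIntegrable (by fun_prop) _ _)
    (continuous_plnKernel.intervalIntegrable _ _) fun u ⟨hu1, hu0⟩ => ?_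
  have hdist : (u - a) ^ 2 ≤ max (a ^ 2) ((1 - a) ^ 2) + (1 + 2 * a) := by
    nlinarith [le_max_left (a ^ 2) ((1 - a) ^ 2)]
  have hrem := exp_sub_one_sub_le_sq_div_two hu0
  simp only [plnKernel, ← exp_add]
  exact exp_le_exp.mpr (by nlinarith [mul_le_mul_of_nonneg_left hdist hθ])

lemma exp_mul_le_intervalIntegral_plnKernel_one_right (hθ : 0 ≤ θ) (ha : 0 ≤ a) :
    exp (-(θ * max (a ^ 2) ((1 - a) ^ 2)) / 2) * (249 / 320) ≤
      ∫ u in (0 : ℝ)..1, plnKernel θ a 1 u := by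
  calc _ = ∫ u in (0 : ℝ)..1, exp (-(θ * max (a ^ 2) ((1 - a) ^ 2)) / 2) *
        (1 - 3 * u ^ 2 / 8) ^ 2 := by
        rw [intervalIntegral.integral_const_mul, integral_one_sub_sq]; norm_num
    _ ≤ _ := by
      refine intervalIntegral.integral_mono_on (by norm_num)
        (Continuous.intervalIntegrable (by fun_prop) _ _)
        (continuous_plnKernel.intervalIntegrable _ _) fun u hu => ?_
      refine le_trans ?_ (exp_mul_exp_le_plnKernel_of_nonneg hθ ha zero_le_one hu)
      rw [one_mul]
      gcongr
      exact one_sub_sq_le_exp_neg (by nlinarith [hu.1, hu.2])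

lemma exp_mul_le_intervalIntegral_plnKernel_one_right_of_four_le (hθ : 0 ≤ θ)
    (hlarge : 4 ≤ θ * (1 + 2 * a)) :
    exp (-(θ * max (a ^ 2) ((1 - a) ^ 2)) / 2) * (11 / 12) ≤
      ∫ u in (0 : ℝ)..1, plnKernel θ a 1 u := by
  have hderiv (u : ℝ) : HasDerivAt (fun u => u + u ^ 2 / 2 - 7 * u ^ 3 / 12)
      (1 + u * (1 - u) - 3 / 4 * u ^ 2) u := by
    refine (((hasDerivAt_id' u).add ((hasDerivAt_pow 2 u).div_const 2)).sub
      (((hasDerivAt_pow 3 u).const_mul 7).div_const 12)).congr_deriv ?_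
    norm_num; ring
  calc _ = ∫ u in (0 : ℝ)..1, exp (-(θ * max (a ^ 2) ((1 - a) ^ 2)) / 2) *
        (1 + u * (1 - u) - 3 / 4 * u ^ 2) := by
        rw [intervalIntegral.integral_const_mul, intervalIntegral.integral_eq_sub_of_hasDerivAt
          (fun u _ => hderiv u) (Continuous.intervalIntegrable (by fun_prop) _ _)]
        norm_num
    _ ≤ _ := by
      refine intervalIntegral.integral_mono_on (by norm_num)
        (Continuous.intervalIntegrable (by fun_prop) _ _)
        (continuous_plnKernel.intervalIntegrable _ _) fun u hu => ?_
      have hgain : θ * (u - a) ^ 2 + 2 * (u * (1 - u)) ≤ θ * max (a ^ 2) ((1 - a) ^ 2) := by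
        nlinarith [mul_le_mul_of_nonneg_left (sq_sub_add_le_max a hu) hθ,
          mul_le_mul_of_nonneg_right hlarge (mul_nonneg hu.1 (sub_nonneg.mpr hu.2))]
      have hrem := exp_sub_one_sub_le_three_quarters_mul_sq
        (abs_le.mpr ⟨by linarith [hu.1], hu.2⟩)
      calc _ ≤ exp (-(θ * max (a ^ 2) ((1 - a) ^ 2)) / 2) *
            exp (u * (1 - u) - 3 / 4 * u ^ 2) := by
            gcongr; linarith [add_one_le_exp (u * (1 - u) - 3 / 4 * u ^ 2)]
        _ ≤ plnKernel θ a 1 u := by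
            simp only [plnKernel, ← exp_add]
            exact exp_le_exp.mpr (by linarith)

lemma le_intervalIntegral_plnKernel_one_of_nonneg (hθ : 0 ≤ θ) (ha : 0 ≤ a) :
    exp (-(θ * max (a ^ 2) ((1 - a) ^ 2)) / 2) * (∫ t in (-1 : ℝ)..0, exp (-t ^ 2 / 2)) ≤
      ∫ u in (-1 : ℝ)..1, plnKernel θ a 1 u := by
  have hS := (exp_pos (-(θ * max (a ^ 2) ((1 - a) ^ 2)) / 2)).le
  have hG := integral_exp_neg_sq_div_two_le
  have hK (p q : ℝ) : IntervalIntegrable (plnKernel θ a 1) volume p q :=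
    continuous_plnKernel.intervalIntegrable p q
  rw [← intervalIntegral.integral_add_adjacent_intervals (hK (-1) 0) (hK 0 1)]
  rcases le_total (θ * (1 + 2 * a)) 4 with hsmall | hlarge
  · have hexp : 1 / 9 ≤ exp (-2) := by
      rw [exp_neg, one_div, inv_le_inv₀ (by norm_num) (exp_pos 2),
        show (2 : ℝ) = 1 + 1 by norm_num, exp_add]
      nlinarith [exp_one_lt_three, exp_pos 1]
    have hloss : (1 - exp (-2)) * (∫ t in (-1 : ℝ)..0, exp (-t ^ 2 / 2)) ≤ 249 / 320 := by
      have hG0 : 0 ≤ ∫ t in (-1 : ℝ)..0, exp (-t ^ 2 / 2) :=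
        intervalIntegral.integral_nonneg (by norm_num) fun t _ => (exp_pos _).le
      nlinarith
    nlinarith [mul_le_mul_of_nonneg_left hloss hS,
      exp_mul_le_intervalIntegral_plnKernel_one_left hθ ha hsmall,
      exp_mul_le_intervalIntegral_plnKernel_one_right hθ ha]
  · nlinarith [exp_mul_le_intervalIntegral_plnKernel_one_right_of_four_le hθ hlarge,
      intervalIntegral.integral_nonneg (μ := volume) (by norm_num : (-1 : ℝ) ≤ 0)
        fun u _ => plnKernel_nonneg (θ := θ) (a := a) (y := 1) u]

lemma le_integral_plnKernel (hθ : 0 < θ) {y : ℕ} (hy : 1 ≤ y) :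
    exp (-(θ * max (a ^ 2) ((1 - a) ^ 2)) / 2) * (∫ t in (-1 : ℝ)..0, exp (-t ^ 2 / 2)) / √y ≤
      ∫ u, plnKernel θ a y u := by
  have hle {p q : ℝ} (hpq : p ≤ q) : ∫ u in p..q, plnKernel θ a y u ≤ ∫ u, plnKernel θ a y u := by
    rw [intervalIntegral.integral_of_le hpq]
    exact setIntegral_le_integral (integrable_plnKernel hθ y.cast_nonneg)
      (Filter.Eventually.of_forall plnKernel_nonneg)
  rcases le_total a 0 with ha | ha
  · exact (le_intervalIntegral_plnKernel_of_nonpos hθ.le ha (by exact_mod_cast hy)).trans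
      (hle (by norm_num))
  rcases hy.eq_or_lt with rfl | hy2
  · rw [Nat.cast_one] at hle ⊢
    rw [sqrt_one, div_one]
    exact (le_intervalIntegral_plnKernel_one_of_nonneg hθ.le ha).trans (hle (by norm_num))
  · exact (le_intervalIntegral_plnKernel_of_nonneg_of_two_le hθ.le ha
      (by exact_mod_cast hy2)).trans (hle (by norm_num))

end plnKernel

lemma sInf_image_le_exp_max (θ L μ : ℝ) :
    sInf ((fun t : ℝ => exp (-(θ * (L - t - μ) ^ 2) / 2)) '' Icc (-1 : ℝ) 0) ≤
      exp (-(θ * max ((μ - L) ^ 2) ((1 - (μ - L)) ^ 2)) / 2) := by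
  have hbdd : BddBelow ((fun t : ℝ => exp (-(θ * (L - t - μ) ^ 2) / 2)) '' Icc (-1 : ℝ) 0) :=
    ⟨0, by rintro _ ⟨t, -, rfl⟩; positivity⟩
  rcases max_choice ((μ - L) ^ 2) ((1 - (μ - L)) ^ 2) with h | h <;> rw [h]
  · have h0 : (0 : ℝ) ∈ Icc (-1) 0 := ⟨by norm_num, le_rfl⟩
    exact (csInf_le hbdd (mem_image_of_mem _ h0)).trans_eq (by ring_nf)
  · have h1 : (-1 : ℝ) ∈ Icc (-1) 0 := ⟨le_rfl, by norm_num⟩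
    exact (csInf_le hbdd (mem_image_of_mem _ h1)).trans_eq (by ring_nf)

theorem stmt_8_general (m M θ μ : ℝ) (hm : 0 < m)
    (hθ : θ ∈ Set.Icc m M) :
    ∀ y : ℕ, 1 ≤ y →
      Real.exp (y * Real.log y - y) *
          sInf ((fun t : ℝ => Real.exp (-(θ * (Real.log y - t - μ) ^ 2) / 2)) ''
            Set.Icc (-1 : ℝ) 0) *
          (∫ t in (-1 : ℝ)..0, Real.exp (-t ^ 2 / 2)) / Real.sqrt y ≤
        f1 y θ μ := by
  intro y hy
  have hinf_nonneg : 0 ≤ sInf ((fun t : ℝ => exp (-(θ * (log y - t - μ) ^ 2) / 2)) ''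
      Icc (-1 : ℝ) 0) := Real.sInf_nonneg (by rintro _ ⟨t, -, rfl⟩; positivity)
  have hG : 0 ≤ (∫ t in (-1 : ℝ)..0, exp (-t ^ 2 / 2)) / √y :=
    div_nonneg (intervalIntegral.integral_nonneg (by norm_num) fun t _ => (exp_pos _).le)
      (sqrt_nonneg _)
  rw [f1_eq_exp_mul_integral_plnKernel hy, mul_assoc, mul_div_assoc]
  gcongr
  rw [mul_div_assoc]
  calc _ ≤ exp (-(θ * max ((μ - log y) ^ 2) ((1 - (μ - log y)) ^ 2)) / 2) *
        ((∫ t in (-1 : ℝ)..0, exp (-t ^ 2 / 2)) / √y) := by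
        gcongr; exact sInf_image_le_exp_max θ (log y) μ
    _ ≤ _ := by rw [← mul_div_assoc]; exact le_integral_plnKernel (hm.trans_le hθ.1) hy

/-- Explicit lower bound for the one-dimensional Poisson log-normal marginal integral:
`f¹(y,θ,μ) ≥ exp(y log y − y) · min_{t∈[−1,0]} exp(−θ(log y − t − μ)²/2) ·
(∫_{−1}^0 exp(−t²/2) dt)/√y` for all integers `y ≥ 1`. -/
theorem stmt_8 (m M θ μ : ℝ) (hm : 0 < m) (hmM : m ≤ M)
    (hθ : θ ∈ Set.Icc m M) (hμ : |μ| ≤ M) :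
    ∀ y : ℕ, 1 ≤ y →
      Real.exp (y * Real.log y - y) *
          sInf ((fun t : ℝ => Real.exp (-(θ * (Real.log y - t - μ) ^ 2) / 2)) ''
            Set.Icc (-1 : ℝ) 0) *
          (∫ t in (-1 : ℝ)..0, Real.exp (-t ^ 2 / 2)) / Real.sqrt y ≤
        f1 y θ μ :=
  stmt_8_general m M θ μ hm hθ
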